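/- Let Ω ⊆ ℝⁿ be open, 1 ≤ k ≤ n, f : Ω×ℝ → ℝ continuous, and g : ℝ → ℝ continuous satisfying (g₀). Set h(x, s) = e^{kG(Φ_g⁻¹(s))} f(x, Φ_g⁻¹(s)). Then u ∈ C²(Ω) satisfies tr_k(D²u) + g(u) D(tr_k)(D²u)[Du⊗Du] + f(x, u) = 0 at every point of Ω if and only if v = Φ_g ∘ u satisfies tr_k(D²v) + h(x, v) = 0 at every point of Ω. -/

import Mathlib

open Real Filter Set

/-- Gradient of `u` at `x` (vector of partial derivatives). -/
noncomputable def vgrad {n : ℕ} (u : (Fin n → ℝ) → ℝ) (x : Fin n → ℝ) : Fin n → ℝ :=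
  fun i => fderiv ℝ u x (Pi.single i 1)

/-- Hessian matrix of `u` at `x`. -/
noncomputable def vhess {n : ℕ} (u : (Fin n → ℝ) → ℝ) (x : Fin n → ℝ) :
    Matrix (Fin n) (Fin n) ℝ :=
  Matrix.of fun i j => fderiv ℝ (fun y => fderiv ℝ u y (Pi.single j 1)) x (Pi.single i 1)

noncomputable def Gg (g : ℝ → ℝ) (s : ℝ) : ℝ := ∫ τ in (0:ℝ)..s, g τ

noncomputable def Phig (g : ℝ → ℝ) (t : ℝ) : ℝ := ∫ s in (0:ℝ)..t, Real.exp (Gg g s)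

/-- Condition `(g₀)`. -/
def g0cond (g : ℝ → ℝ) : Prop :=
  ∃ s₀ : ℝ, 0 ≤ s₀ ∧ (∀ s, s₀ ≤ s → 0 ≤ g s) ∧ (∀ s, s ≤ -s₀ → g s ≤ 0)
/-- The k-trace: the sum of all k×k principal minors of a matrix. -/
noncomputable def ktrace (n k : ℕ) (X : Matrix (Fin n) (Fin n) ℝ) : ℝ :=
  ∑ S ∈ Finset.univ.powersetCard k,
    (X.submatrix (fun i : {a : Fin n // a ∈ S} => (i : Fin n))
      (fun j : {a : Fin n // a ∈ S} => (j : Fin n))).det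

/-- The derivative of the k-trace at X in the direction A: the Fréchet derivative
D(tr_k)(X)[A] (tr_k being a polynomial map, its Fréchet derivative applied to A equals its
directional derivative along A). -/
noncomputable def ktraceDeriv (n k : ℕ) (X A : Matrix (Fin n) (Fin n) ℝ) : ℝ :=
  deriv (fun t : ℝ => ktrace n k (X + t • A)) 0

/-!
Writing `v = Φ_g ∘ u`, the chain rule gives `D²v = e^{G(u)} (D²u + g(u) Du ⊗ Du)`. The k-trace is
homogeneous of degree `k` and, by the matrix determinant lemma applied to each principal minor,
affine along rank-one directions, so
`tr_k(D²v) = e^{kG(u)} (tr_k(D²u) + g(u) D(tr_k)(D²u)[Du ⊗ Du])`. Since `Φ_g⁻¹ ∘ v = u`, the two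
equations differ by the nonvanishing factor `e^{kG(u)}`.
-/

open Topology Matrix

section RankOneUpdate

variable {m : Type*} [Fintype m] [DecidableEq m]

theorem det_add_smul_vecMulVec_of_isUnit {A : Matrix m m ℝ} (hA : IsUnit A.det)
    (u v : m → ℝ) (t : ℝ) :
    (A + t • vecMulVec u v).det = A.det * (1 + t * (v ᵥ* A⁻¹ ⬝ᵥ u)) := by
  rw [← smul_vecMulVec, vecMulVec_eq Unit, det_add_replicateCol_mul_replicateRow hA,
    ← replicateRow_vecMul, det_unique (n := Unit)]
  simp

theorem finite_setOf_not_isUnit_det_add_smul_one (M : Matrix m m ℝ) :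
    {ε : ℝ | ¬ IsUnit (M + ε • (1 : Matrix m m ℝ)).det}.Finite := by
  refine (Polynomial.finite_setOfPred_isRoot (-M).charpoly_monic.ne_zero).subset fun ε hε => ?_
  rw [Set.mem_ofPred_eq, isUnit_iff_ne_zero, not_not] at hε
  rwa [Set.mem_ofPred_eq, Polynomial.IsRoot, eval_charpoly, scalar_apply, sub_neg_eq_add,
    add_comm, ← smul_one_eq_diagonal]

theorem det_add_smul_vecMulVec (M : Matrix m m ℝ) (u v : m → ℝ) (t : ℝ) :
    (M + t • vecMulVec u v).det = M.det + t * ((M + vecMulVec u v).det - M.det) := by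
  -- the invertible case is the matrix determinant lemma; extend it by density of the
  -- invertible shifts `M + ε • 1`
  let shift : ℝ → Matrix m m ℝ := fun ε => M + ε • (1 : Matrix m m ℝ)
  have hshift : Continuous shift := continuous_const.add (continuous_id.smul continuous_const)
  have hdense : Dense {ε : ℝ | IsUnit (shift ε).det} := by
    simpa [Set.compl_ofPred] using
      (finite_setOf_not_isUnit_det_add_smul_one M).countable.dense_compl ℝ
  have hshift_det : (fun ε => (shift ε + t • vecMulVec u v).det) =
      fun ε => (shift ε).det + t * ((shift ε + vecMulVec u v).det - (shift ε).det) := by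
    refine (hshift.add continuous_const).matrix_det.ext_on hdense
      (hshift.matrix_det.add (continuous_const.mul
        ((hshift.add continuous_const).matrix_det.sub hshift.matrix_det))) fun ε hε => ?_
    have h1 := det_add_smul_vecMulVec_of_isUnit hε u v 1
    rw [one_smul] at h1
    simp only [Pi.add_apply, det_add_smul_vecMulVec_of_isUnit hε, h1]
    ring
  simpa [shift] using congrFun hshift_det 0

end RankOneUpdate

section KTrace

variable (n k : ℕ)

theorem ktrace_smul (c : ℝ) (X : Matrix (Fin n) (Fin n) ℝ) :
    ktrace n k (c • X) = c ^ k * ktrace n k X := by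
  rw [ktrace, ktrace, Finset.mul_sum]
  refine Finset.sum_congr rfl fun S hS => ?_
  rw [submatrix_smul, Pi.smul_apply, Pi.smul_apply, det_smul, Fintype.card_coe,
    (Finset.mem_powersetCard.mp hS).2]

theorem ktrace_add_smul_vecMulVec (X : Matrix (Fin n) (Fin n) ℝ) (u v : Fin n → ℝ) (t : ℝ) :
    ktrace n k (X + t • vecMulVec u v)
      = ktrace n k X + t * (ktrace n k (X + vecMulVec u v) - ktrace n k X) := by
  simp only [ktrace, ← Finset.sum_sub_distrib, Finset.mul_sum, ← Finset.sum_add_distrib]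
  refine Finset.sum_congr rfl fun S _ => ?_
  exact det_add_smul_vecMulVec (X.submatrix Subtype.val Subtype.val)
    (fun i : {a // a ∈ S} => u i) (fun i => v i) t

theorem ktraceDeriv_vecMulVec (X : Matrix (Fin n) (Fin n) ℝ) (u v : Fin n → ℝ) :
    ktraceDeriv n k X (vecMulVec u v) = ktrace n k (X + vecMulVec u v) - ktrace n k X := by
  rw [ktraceDeriv, funext (ktrace_add_smul_vecMulVec n k X u v)]
  simp

end KTrace

theorem hasDerivAt_Gg {g : ℝ → ℝ} (hg : Continuous g) (t : ℝ) : HasDerivAt (Gg g) (g t) t :=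
  intervalIntegral.integral_hasDerivAt_right (hg.intervalIntegrable _ _)
    (hg.stronglyMeasurableAtFilter _ _) hg.continuousAt

theorem hasDerivAt_Phig {g : ℝ → ℝ} (hg : Continuous g) (t : ℝ) :
    HasDerivAt (Phig g) (exp (Gg g t)) t := by
  have hG : Continuous (Gg g) := continuous_iff_continuousAt.2 fun s =>
    (hasDerivAt_Gg hg s).continuousAt
  exact intervalIntegral.integral_hasDerivAt_right (hG.rexp.intervalIntegrable _ _)
    (hG.rexp.stronglyMeasurableAtFilter _ _) hG.rexp.continuousAt

theorem vhess_comp {n : ℕ} {φ φ' : ℝ → ℝ} {φ'' : ℝ} {u : (Fin n → ℝ) → ℝ} {x : Fin n → ℝ}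
    (hφ : ∀ t, HasDerivAt φ (φ' t) t) (hφ' : HasDerivAt φ' φ'' (u x))
    (hu : ContDiffAt ℝ 2 u x) :
    vhess (φ ∘ u) x = φ' (u x) • vhess u x + φ'' • vecMulVec (vgrad u x) (vgrad u x) := by
  have hu_diff : ∀ᶠ y in 𝓝 x, DifferentiableAt ℝ u y :=
    (hu.eventually (by simp)).mono fun y hy => hy.differentiableAt (by norm_num)
  have hpartial : ∀ j : Fin n, (fun y => fderiv ℝ (φ ∘ u) y (Pi.single j 1))
      =ᶠ[𝓝 x] fun y => φ' (u y) * fderiv ℝ u y (Pi.single j 1) := fun j =>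
    hu_diff.mono fun y hy => by
      simp [((hφ (u y)).comp_hasFDerivAt y hy.hasFDerivAt).fderiv]
  have hφ'u : HasFDerivAt (fun y => φ' (u y)) (φ'' • fderiv ℝ u x) x :=
    hφ'.comp_hasFDerivAt x (hu.differentiableAt (by norm_num)).hasFDerivAt
  have hDu : ∀ j : Fin n, DifferentiableAt ℝ (fun y => fderiv ℝ u y (Pi.single j 1)) x :=
    fun j => ((hu.fderiv_right (m := 1) (by norm_num)).differentiableAt one_ne_zero).clm_apply
      (differentiableAt_const _)
  ext i j
  change fderiv ℝ (fun y => fderiv ℝ (φ ∘ u) y (Pi.single j 1)) x (Pi.single i 1) = _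
  rw [(hpartial j).fderiv_eq, fderiv_fun_mul hφ'u.differentiableAt (hDu j), hφ'u.fderiv]
  simp only [_root_.add_apply, _root_.smul_apply, smul_eq_mul, Matrix.add_apply,
    Matrix.smul_apply, vecMulVec_apply, vgrad, vhess, of_apply]
  ring

theorem vhess_Phig_comp {n : ℕ} {g : ℝ → ℝ} (hg : Continuous g) {u : (Fin n → ℝ) → ℝ}
    {x : Fin n → ℝ} (hu : ContDiffAt ℝ 2 u x) :
    vhess (Phig g ∘ u) x
      = exp (Gg g (u x)) • (vhess u x + g (u x) • vecMulVec (vgrad u x) (vgrad u x)) := by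
  rw [vhess_comp (hasDerivAt_Phig hg) (hasDerivAt_Gg hg (u x)).exp hu, smul_add, smul_smul]

theorem ktrace_vhess_Phig_comp {n : ℕ} (k : ℕ) {g : ℝ → ℝ} (hg : Continuous g)
    {u : (Fin n → ℝ) → ℝ} {x : Fin n → ℝ} (hu : ContDiffAt ℝ 2 u x) :
    ktrace n k (vhess (Phig g ∘ u) x)
      = exp (k * Gg g (u x)) * (ktrace n k (vhess u x)
          + g (u x) * ktraceDeriv n k (vhess u x) (vecMulVec (vgrad u x) (vgrad u x))) := by
  rw [vhess_Phig_comp hg hu, ktrace_smul, ktrace_add_smul_vecMulVec, ← ktraceDeriv_vecMulVec,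
    ← exp_nat_mul]

theorem stmt18_general {n : ℕ} (Ω : Set (Fin n → ℝ)) (hΩ : IsOpen Ω)
    (k : ℕ)
    (f : (Fin n → ℝ) → ℝ → ℝ)
    (g : ℝ → ℝ) (hg : Continuous g)
    (Φinv : ℝ → ℝ) (hleft : ∀ t : ℝ, Φinv (Phig g t) = t)
    (u : (Fin n → ℝ) → ℝ) (hu : ContDiffOn ℝ 2 u Ω) :
    (∀ x ∈ Ω, ktrace n k (vhess u x)
        + g (u x) * ktraceDeriv n k (vhess u x) (Matrix.vecMulVec (vgrad u x) (vgrad u x))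
        + f x (u x) = 0) ↔
    (∀ x ∈ Ω, ktrace n k (vhess (Phig g ∘ u) x)
        + Real.exp ((k : ℝ) * Gg g (Φinv ((Phig g ∘ u) x)))
            * f x (Φinv ((Phig g ∘ u) x)) = 0) := by
  refine forall₂_congr fun x hx => ?_
  rw [Function.comp_apply, hleft, ktrace_vhess_Phig_comp k hg (hu.contDiffAt (hΩ.mem_nhds hx)),
    ← mul_add, mul_eq_zero, or_iff_right (exp_ne_zero _)]

/-- k-Hessian: u ∈ C²(Ω) solves
tr_k(D²u) + g(u) D(tr_k)(D²u)[Du⊗Du] + f(x,u) = 0 iff v = Φ_g ∘ u solves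
tr_k(D²v) + h(x,v) = 0 with h(x,s) = e^{kG(Φ_g⁻¹(s))} f(x, Φ_g⁻¹(s)). -/
theorem stmt18 {n : ℕ} (Ω : Set (Fin n → ℝ)) (hΩ : IsOpen Ω)
    (k : ℕ) (hk1 : 1 ≤ k) (hkn : k ≤ n)
    (f : (Fin n → ℝ) → ℝ → ℝ)
    (hf : ContinuousOn (fun q : (Fin n → ℝ) × ℝ => f q.1 q.2) (Ω ×ˢ Set.univ))
    (g : ℝ → ℝ) (hg : Continuous g) (hg0 : g0cond g)
    (Φinv : ℝ → ℝ) (hleft : ∀ t : ℝ, Φinv (Phig g t) = t)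
    (hright : ∀ s : ℝ, Phig g (Φinv s) = s)
    (u : (Fin n → ℝ) → ℝ) (hu : ContDiffOn ℝ 2 u Ω) :
    (∀ x ∈ Ω, ktrace n k (vhess u x)
        + g (u x) * ktraceDeriv n k (vhess u x) (Matrix.vecMulVec (vgrad u x) (vgrad u x))
        + f x (u x) = 0) ↔
    (∀ x ∈ Ω, ktrace n k (vhess (Phig g ∘ u) x)
        + Real.exp ((k : ℝ) * Gg g (Φinv ((Phig g ∘ u) x)))
            * f x (Φinv ((Phig g ∘ u) x)) = 0) :=
  stmt18_general Ω hΩ k f g hg Φinv hleft u hu
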